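/- The limit as m → ∞ (with n = 4m) of 4·(∑_{k=1}^{n/4} (cos((k-1)π/(n-3)) − cos((2k-1)π/(2n-2))) + ∑_{k=n/4+1}^{n/2−1} (cos((2k-1)π/(2n-2)) − cos((k-1)π/(n-3)))) equals (8 − 8√2 + 2π)/π. -/

import Mathlib

/-!
Both sums are sums of cosines along arithmetic progressions, which telescope after multiplying
by `2 sin` of half the common difference. With `ψ = π / (8m - 6)` and `φ = π / (8m - 2)` the
expression becomes `h₁ ψ / sin ψ - h₂ φ / sin φ + 2`, where `h₁ 0 = h₂ 0 = 2√2 - 2` and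
`h₁' 0 = h₂' 0 = √2`. Since `h t / sin t - h 0 / t → h' 0` as `t → 0` and `1/ψ - 1/φ = -4/π`
exactly, the singular parts cancel up to the constant `-4 (2√2 - 2) / π`.
-/

open Real Filter Finset Topology

lemma two_mul_sin_mul_sum_cos_even (x : ℝ) (M : ℕ) :
    2 * sin x * ∑ k ∈ Icc 1 M, cos (2 * ((k : ℝ) - 1) * x) = sin ((2 * M - 1) * x) + sin x := by
  induction M with
  | zero => simp [sin_neg]
  | succ M ih =>
    rw [sum_Icc_succ_top (by omega), mul_add, ih, two_mul_sin_mul_cos]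
    push_cast
    rw [show x - 2 * ((M : ℝ) + 1 - 1) * x = -((2 * M - 1) * x) by ring, sin_neg]
    ring_nf

lemma two_mul_sin_mul_sum_cos_odd (x : ℝ) (M : ℕ) :
    2 * sin x * ∑ k ∈ Icc 1 M, cos ((2 * (k : ℝ) - 1) * x) = sin (2 * M * x) := by
  induction M with
  | zero => simp
  | succ M ih =>
    rw [sum_Icc_succ_top (by omega), mul_add, ih, two_mul_sin_mul_cos]
    push_cast
    rw [show x - (2 * ((M : ℝ) + 1) - 1) * x = -(2 * M * x) by ring, sin_neg]
    ring_nf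

lemma tendsto_self_div_sin : Tendsto (fun t => t / sin t) (𝓝[≠] 0) (𝓝 1) := by
  have h : Tendsto (fun t => (sinc t)⁻¹) (𝓝 0) (𝓝 1) := by
    simpa [sinc_zero] using (continuous_sinc.tendsto 0).inv₀ (by simp [sinc_zero])
  refine (h.mono_left nhdsWithin_le_nhds).congr' ?_
  filter_upwards [self_mem_nhdsWithin] with t ht
  rw [sinc_of_ne_zero ht, inv_div]

lemma abs_sin_sub_self_le {x : ℝ} (hx : |x| ≤ 1) : |sin x - x| ≤ |x| ^ 3 := by
  have h := sin_bound hx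
  have h3 : |x ^ 3 / 6| = |x| ^ 3 / 6 := by rw [abs_div, abs_pow]; norm_num
  have h5 : |x| ^ 5 ≤ |x| ^ 3 := pow_le_pow_of_le_one (abs_nonneg x) hx (by norm_num)
  calc |sin x - x| = |(sin x - (x - x ^ 3 / 6)) - x ^ 3 / 6| := by ring_nf
    _ ≤ |sin x - (x - x ^ 3 / 6)| + |x ^ 3 / 6| := abs_sub _ _
    _ ≤ |x| ^ 3 := by rw [h3]; nlinarith [pow_nonneg (abs_nonneg x) 3]

lemma eventually_sin_ne_zero : ∀ᶠ t in 𝓝[≠] (0 : ℝ), sin t ≠ 0 := by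
  filter_upwards [self_mem_nhdsWithin,
    mem_nhdsWithin_of_mem_nhds (Ioo_mem_nhds (neg_neg_of_pos pi_pos) pi_pos)] with t ht hπ
  exact mt (sin_eq_zero_iff_of_lt_of_lt hπ.1 hπ.2).1 ht

lemma tendsto_inv_sin_sub_inv : Tendsto (fun t => (sin t)⁻¹ - t⁻¹) (𝓝[≠] 0) (𝓝 0) := by
  have hq : Tendsto (fun t => (t - sin t) / t ^ 2) (𝓝[≠] 0) (𝓝 0) := by
    refine squeeze_zero_norm' ?_
      ((continuous_abs.tendsto' 0 0 abs_zero).mono_left nhdsWithin_le_nhds)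
    filter_upwards [self_mem_nhdsWithin,
      mem_nhdsWithin_of_mem_nhds (Icc_mem_nhds neg_one_lt_zero one_pos)] with t ht ht1
    have h1 : |t| ≤ 1 := abs_le.2 ht1
    have hpos : 0 < |t| := abs_pos.2 ht
    rw [Real.norm_eq_abs, abs_div, abs_sub_comm, abs_pow, div_le_iff₀ (by positivity)]
    exact (abs_sin_sub_self_le h1).trans_eq (by ring)
  have := hq.mul tendsto_self_div_sin
  rw [zero_mul] at this
  refine this.congr' ?_
  filter_upwards [self_mem_nhdsWithin, eventually_sin_ne_zero] with t (ht : t ≠ 0) hs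
  field_simp

lemma HasDerivAt.tendsto_div_sin_sub_div {h : ℝ → ℝ} {d : ℝ} (hd : HasDerivAt h d 0) :
    Tendsto (fun t => h t / Real.sin t - h 0 / t) (𝓝[≠] 0) (𝓝 d) := by
  have hslope := (hasDerivAt_iff_tendsto_slope.1 hd).mul tendsto_self_div_sin
  have := hslope.add (tendsto_inv_sin_sub_inv.const_mul (h 0))
  rw [mul_one, mul_zero, add_zero] at this
  refine this.congr' ?_
  filter_upwards [self_mem_nhdsWithin, eventually_sin_ne_zero] with t (ht : t ≠ 0) hs
  simp only [slope_fun_def_field, sub_zero]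
  field_simp
  ring

lemma tendsto_pi_div_mul_natCast_sub {a : ℝ} (ha : 0 < a) (b : ℝ) :
    Tendsto (fun m : ℕ => π / (a * m - b)) atTop (𝓝[≠] 0) := by
  have hden : Tendsto (fun m : ℕ => a * m - b) atTop atTop :=
    tendsto_atTop_add_const_right _ (-b) (tendsto_natCast_atTop_atTop.const_mul_atTop ha)
  refine tendsto_nhdsWithin_of_tendsto_nhds_of_eventually_within _
    (tendsto_const_nhds.div_atTop hden) ?_
  filter_upwards [hden.eventually_gt_atTop 0] with m hm
  exact (div_pos pi_pos hm).ne'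

lemma sum_Icc_cos_sub_cos {ψ φ : ℝ} (hψ : sin ψ ≠ 0) (hφ : sin φ ≠ 0) (M : ℕ) :
    ∑ k ∈ Icc 1 M, (cos (2 * ((k : ℝ) - 1) * ψ) - cos ((2 * (k : ℝ) - 1) * φ)) =
      (sin ((2 * M - 1) * ψ) + sin ψ) / (2 * sin ψ) - sin (2 * M * φ) / (2 * sin φ) := by
  rw [sum_sub_distrib, ← two_mul_sin_mul_sum_cos_even, ← two_mul_sin_mul_sum_cos_odd,
    mul_div_cancel_left₀ _ (mul_ne_zero two_ne_zero hψ),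
    mul_div_cancel_left₀ _ (mul_ne_zero two_ne_zero hφ)]

lemma sum_Icc_add_one_eq_sub {G : Type*} [AddCommGroup G] (f : ℕ → G) {a b : ℕ} (hab : a ≤ b) :
    ∑ k ∈ Icc (a + 1) b, f k = ∑ k ∈ Icc 1 b, f k - ∑ k ∈ Icc 1 a, f k := by
  have hIoc (n : ℕ) : Icc 1 n = Ioc 0 n := Icc_add_one_left_eq_Ioc 0 n
  rw [eq_sub_iff_add_eq', hIoc, hIoc, Icc_add_one_left_eq_Ioc,
    sum_Ioc_consecutive f (Nat.zero_le a) hab]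

lemma sum_Icc_sub_add_sum_Icc_sub_swap {G : Type*} [AddCommGroup G] (f g : ℕ → G) {a b : ℕ}
    (hab : a ≤ b) :
    ∑ k ∈ Icc 1 a, (f k - g k) + ∑ k ∈ Icc (a + 1) b, (g k - f k) =
      2 • ∑ k ∈ Icc 1 a, (f k - g k) - ∑ k ∈ Icc 1 b, (f k - g k) := by
  rw [sum_Icc_add_one_eq_sub _ hab]
  simp only [sum_sub_distrib]
  abel

lemma sin_pi_div_ne_zero {a : ℝ} (ha : 1 < a) : sin (π / a) ≠ 0 :=
  (sin_pos_of_pos_of_lt_pi (div_pos pi_pos (by linarith)) (div_lt_self pi_pos ha)).ne'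

lemma four_mul_sum_eq_closed_form {m : ℕ} (hm : 1 ≤ m) {ψ φ : ℝ} (hψ : ψ = π / (8 * m - 6))
    (hφ : φ = π / (8 * m - 2)) :
    4 * ((∑ k ∈ Icc 1 m, (cos (((k : ℝ) - 1) * π / (4 * (m : ℝ) - 3)) -
            cos ((2 * (k : ℝ) - 1) * π / (2 * (4 * (m : ℝ)) - 2)))) +
        ∑ k ∈ Icc (m + 1) (2 * m - 1), (cos ((2 * (k : ℝ) - 1) * π / (2 * (4 * (m : ℝ)) - 2)) -
            cos (((k : ℝ) - 1) * π / (4 * (m : ℝ) - 3)))) =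
      (4 * sin (π / 4 + ψ / 2) - 2) / sin ψ - (4 * sin (π / 4 + φ / 2) - 2 * cos φ) / sin φ
        + 2 := by
  have hm' : (1 : ℝ) ≤ m := by exact_mod_cast hm
  have hsψ : sin ψ ≠ 0 := hψ ▸ sin_pi_div_ne_zero (by linarith)
  have hsφ : sin φ ≠ 0 := hφ ▸ sin_pi_div_ne_zero (by linarith)
  have hsum (M : ℕ) : ∑ k ∈ Icc 1 M, (cos (((k : ℝ) - 1) * π / (4 * (m : ℝ) - 3)) -
      cos ((2 * (k : ℝ) - 1) * π / (2 * (4 * (m : ℝ)) - 2))) =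
      (sin ((2 * M - 1) * ψ) + sin ψ) / (2 * sin ψ) - sin (2 * M * φ) / (2 * sin φ) := by
    rw [← sum_Icc_cos_sub_cos hsψ hsφ]
    refine sum_congr rfl fun k _ => ?_
    have h₃ : (4 * m - 3 : ℝ) ≠ 0 := by linarith
    rw [hψ, hφ, show (8 * m - 6 : ℝ) = 2 * (4 * m - 3) by ring,
      show (8 * m - 2 : ℝ) = 2 * (4 * m) - 2 by ring]
    congr 2
    · field_simp
    · ring
  rw [sum_Icc_sub_add_sum_Icc_sub_swap _ _ (show m ≤ 2 * m - 1 by omega), hsum, hsum,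
    Nat.cast_sub (by omega), nsmul_eq_mul]
  push_cast
  replace hψ : (8 * m - 6) * ψ = π := by rw [hψ]; exact mul_div_cancel₀ π (by linarith)
  replace hφ : (8 * m - 2) * φ = π := by rw [hφ]; exact mul_div_cancel₀ π (by linarith)
  have e₁ : (2 * m - 1) * ψ = π / 4 + ψ / 2 := by linear_combination hψ / 4
  have e₂ : 2 * m * φ = π / 4 + φ / 2 := by linear_combination hφ / 4
  have e₃ : (2 * (2 * m - 1) - 1) * ψ = π / 2 := by linear_combination hψ / 2
  have e₄ : 2 * (2 * m - 1) * φ = π / 2 - φ := by linear_combination hφ / 2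
  rw [e₁, e₂, e₃, e₄, sin_pi_div_two, sin_pi_div_two_sub]
  field_simp
  ring

lemma hasDerivAt_four_mul_sin_pi_div_four_add_half :
    HasDerivAt (fun t => 4 * sin (π / 4 + t / 2)) (√2) 0 := by
  refine ((((hasDerivAt_id (0 : ℝ)).div_const 2).const_add (π / 4)).sin.const_mul 4).congr_deriv
    ?_
  rw [id, zero_div, add_zero, cos_pi_div_four]
  ring

theorem stmt10 :
    Tendsto (fun m : ℕ =>
      (4 : ℝ) *
        ((∑ k ∈ Finset.Icc 1 ((4 * m) / 4),
            (Real.cos (((k : ℝ) - 1) * Real.pi / (4 * (m : ℝ) - 3)) -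
              Real.cos ((2 * (k : ℝ) - 1) * Real.pi / (2 * (4 * (m : ℝ)) - 2)))) +
          ∑ k ∈ Finset.Icc ((4 * m) / 4 + 1) ((4 * m) / 2 - 1),
            (Real.cos ((2 * (k : ℝ) - 1) * Real.pi / (2 * (4 * (m : ℝ)) - 2)) -
              Real.cos (((k : ℝ) - 1) * Real.pi / (4 * (m : ℝ) - 3)))))
      atTop (nhds ((8 - 8 * Real.sqrt 2 + 2 * Real.pi) / Real.pi)) := by
  have hψ : HasDerivAt (fun t => 4 * sin (π / 4 + t / 2) - 2) (√2) 0 :=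
    hasDerivAt_four_mul_sin_pi_div_four_add_half.sub_const 2
  have hφ : HasDerivAt (fun t => 4 * sin (π / 4 + t / 2) - 2 * cos t) (√2) 0 := by
    refine (hasDerivAt_four_mul_sin_pi_div_four_add_half.sub
      ((hasDerivAt_cos 0).const_mul 2)).congr_deriv ?_
    rw [sin_zero, neg_zero, mul_zero, sub_zero]
  -- `h 0 / ψ - h 0 / φ = -4 (2√2 - 2) / π` is the constant left over by the two singular parts
  have h8 : (0 : ℝ) < 8 := by norm_num
  have hlim := ((hψ.tendsto_div_sin_sub_div.comp (tendsto_pi_div_mul_natCast_sub h8 6)).sub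
    (hφ.tendsto_div_sin_sub_div.comp (tendsto_pi_div_mul_natCast_sub h8 2))).add_const
    (2 - 4 * (2 * √2 - 2) / π)
  rw [show √2 - √2 + (2 - 4 * (2 * √2 - 2) / π) = (8 - 8 * √2 + 2 * π) / π by
    field_simp; ring] at hlim
  refine hlim.congr' ?_
  filter_upwards [eventually_ge_atTop 1] with m hm
  have hm' : (1 : ℝ) ≤ m := by exact_mod_cast hm
  have h₆ : (8 * m - 6 : ℝ) ≠ 0 := by linarith
  have h₂ : (8 * m - 2 : ℝ) ≠ 0 := by linarith
  rw [show 4 * m / 4 = m by omega, show 4 * m / 2 = 2 * m by omega,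
    four_mul_sum_eq_closed_form hm rfl rfl]
  simp only [Function.comp_apply, zero_div, add_zero, sin_pi_div_four, cos_zero]
  field_simp
  ring
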